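/- arXiv:1601.05187 — 3 statements merged into one kernel-verified Lean document; each statement's English description precedes it below -/
import Mathlib

section
/- A dynamic policy ↣ is local with respect to the relations {∼^◇_u}_{u∈D} if and only if it is local with respect to the relations {∼^□_u}_{u∈D}. -/
open Classical

/-- Binary trees over actions, values of the `ta` purge functions. -/
inductive TATree (A : Type) : Type where
  | eps : TATree A
  | node : TATree A → TATree A → A → TATree A

/-- Run a deterministic system along a trace (newest action at the head of the list). -/
def runL {S A : Type} (step : S → A → S) (s0 : S) : List A → S
  | [] => s0
  | a :: α => step (runL step s0 α) a

/-- The permissive purge function `ta^◇` for a dynamic policy `P`. -/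
noncomputable def taD {D A : Type} (dm : A → D) (P : List A → D → D → Prop) :
    List A → D → TATree A
  | [], _ => TATree.eps
  | a :: α, u =>
    if P α (dm a) u then TATree.node (taD dm P α u) (taD dm P α (dm a)) a
    else taD dm P α u

/-- The unwinding relations: smallest family of equivalence relations on traces
satisfying WSC and DLR with respect to the dynamic policy `P`. -/
inductive Unw {D A : Type} (dm : A → D) (P : List A → D → D → Prop) :
    D → List A → List A → Prop where
  | refl (u : D) (α : List A) : Unw dm P u α α
  | symm {u : D} {α β : List A} : Unw dm P u α β → Unw dm P u β α
  | trans {u : D} {α β γ : List A} : Unw dm P u α β → Unw dm P u β γ → Unw dm P u α γ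
  | dlr (u : D) (α : List A) (a : A) : ¬ P α (dm a) u → Unw dm P u (a :: α) α
  | wsc (u : D) {α β : List A} (a : A) :
      Unw dm P u α β → Unw dm P (dm a) α β → Unw dm P u (a :: α) (a :: β)

/-- The prohibitive purge function `ta^□`, whose condition is distributed knowledge
of the policy edge, interpreted over the Kripke structure given by the unwinding relations. -/
noncomputable def taB {D A : Type} (dm : A → D) (P : List A → D → D → Prop) :
    List A → D → TATree A
  | [], _ => TATree.eps
  | a :: α, u =>
    if (∀ β, Unw dm P u α β → Unw dm P (dm a) α β → P β (dm a) u) then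
      TATree.node (taB dm P α u) (taB dm P α (dm a)) a
    else taB dm P α u

/-!
Both purge functions keep or skip each action according to a condition. For any such purge
whose skips are justified by the unwinding relation, equal purges are unwinding-related.
The condition of `ta^□` is invariant under `∼ᵘⁿʷ`, so its kernel is exactly `∼ᵘⁿʷ`; the condition
of `ta^◇` is invariant under `∼ᵘⁿʷ` as soon as the policy is `ta^◇`-local, and then its kernel is
`∼ᵘⁿʷ` too, so a `ta^◇`-local policy is `ta^□`-local. Conversely the kernel of `ta^◇` is always
contained in `∼ᵘⁿʷ`, so `ta^□`-locality implies `ta^◇`-locality.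
-/

section Purge

variable {D A : Type} (dm : A → D) (P : List A → D → D → Prop)

def PolicyLocal (R : D → List A → List A → Prop) : Prop :=
  ∀ u v (α β : List A), R u α β → R v α β → (P α u v ↔ P β u v)

theorem PolicyLocal.anti {R R' : D → List A → List A → Prop} (hR : ∀ u α β, R u α β → R' u α β)
    (h : PolicyLocal P R') : PolicyLocal P R :=
  fun u v α β hu hv => h u v α β (hR u α β hu) (hR v α β hv)

variable {dm P}

theorem unw_of_purge_eq (f : List A → D → TATree A) (c : List A → A → D → Prop)
    (hnil : ∀ u, f [] u = .eps)
    (hcons : ∀ a α u, f (a :: α) u = if c α a u then .node (f α u) (f α (dm a)) a else f α u)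
    (hskip : ∀ a α u, ¬ c α a u → Unw dm P u (a :: α) α) :
    ∀ α β u, f α u = f β u → Unw dm P u α β := by
  have node_ne_nil : ∀ a α u, c α a u → f (a :: α) u ≠ f [] u := by
    intro a α u hc h
    rw [hcons, if_pos hc, hnil] at h
    cases h
  intro α
  induction α with
  | nil =>
    intro β u
    induction β with
    | nil => exact fun _ => .refl u []
    | cons b β ih =>
      intro h
      by_cases hc : c β b u
      · exact absurd h.symm (node_ne_nil b β u hc)
      · rw [hcons, if_neg hc] at h
        exact .trans (ih h) (.symm (hskip b β u hc))
  | cons a α ihα =>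
    intro β u
    by_cases hca : c α a u
    · induction β with
      | nil => exact fun h => absurd h (node_ne_nil a α u hca)
      | cons b β ihβ =>
        intro h
        by_cases hcb : c β b u
        · rw [hcons, hcons, if_pos hca, if_pos hcb] at h
          injection h with h₁ h₂ hab
          subst hab
          exact .wsc u a (ihα β u h₁) (ihα β (dm a) h₂)
        · rw [hcons b β, if_neg hcb] at h
          exact .trans (ihβ h) (.symm (hskip b β u hcb))
    · intro h
      rw [hcons, if_neg hca] at h
      exact .trans (hskip a α u hca) (ihα β u h)

theorem purge_eq_of_unw (f : List A → D → TATree A) (c : List A → A → D → Prop)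
    (hcons : ∀ a α u, f (a :: α) u = if c α a u then .node (f α u) (f α (dm a)) a else f α u)
    (hdlr : ∀ a α u, ¬ P α (dm a) u → ¬ c α a u)
    (hwsc : ∀ a α β u, Unw dm P u α β → Unw dm P (dm a) α β →
      f α u = f β u → f α (dm a) = f β (dm a) → (c α a u ↔ c β a u))
    {u : D} {α β : List A} (h : Unw dm P u α β) : f α u = f β u := by
  induction h with
  | refl => rfl
  | symm _ ih => exact ih.symm
  | trans _ _ ih₁ ih₂ => exact ih₁.trans ih₂
  | dlr u α a hc => rw [hcons, if_neg (hdlr a α u hc)]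
  | @wsc u α β a h₁ h₂ ih₁ ih₂ =>
    have hc_iff := hwsc a α β u h₁ h₂ ih₁ ih₂
    rw [hcons, hcons]
    by_cases hc : c α a u
    · rw [if_pos hc, if_pos (hc_iff.mp hc), ih₁, ih₂]
    · rw [if_neg hc, if_neg (mt hc_iff.mpr hc), ih₁]

/-- Through a witness `γ` to the failure: `a :: α ∼ a :: γ` by WSC, `a :: γ ∼ γ` by DLR,
and `γ ∼ α`. -/
theorem Unw.cons_of_not_forall {u : D} {α : List A} {a : A}
    (h : ¬ ∀ β, Unw dm P u α β → Unw dm P (dm a) α β → P β (dm a) u) :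
    Unw dm P u (a :: α) α := by
  simp only [not_forall] at h
  obtain ⟨γ, hu, ha, hP⟩ := h
  exact .trans (.wsc u a hu ha) (.trans (.dlr u γ a hP) (.symm hu))

variable (dm P)

theorem unw_of_taD_eq {α β : List A} {u : D} (h : taD dm P α u = taD dm P β u) :
    Unw dm P u α β :=
  unw_of_purge_eq (taD dm P) (fun α a u => P α (dm a) u) (fun _ => rfl) (fun _ _ _ => rfl)
    (fun a α u hc => .dlr u α a hc) α β u h

theorem unw_iff_taB_eq {α β : List A} {u : D} :
    Unw dm P u α β ↔ taB dm P α u = taB dm P β u := by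
  refine ⟨purge_eq_of_unw (taB dm P) _ (fun _ _ _ => rfl) ?_ ?_, unw_of_purge_eq (taB dm P) _
    (fun _ => rfl) (fun _ _ _ => rfl) (fun _ _ _ => Unw.cons_of_not_forall) α β u⟩
  · exact fun a α u hP hall => hP (hall α (.refl u α) (.refl (dm a) α))
  · intro a α β u hu ha _ _
    exact ⟨fun hall γ hγu hγa => hall γ (hu.trans hγu) (ha.trans hγa),
      fun hall γ hγu hγa => hall γ (hu.symm.trans hγu) (ha.symm.trans hγa)⟩

theorem taD_eq_of_unw (hloc : PolicyLocal P fun u α β => taD dm P α u = taD dm P β u)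
    {α β : List A} {u : D} (h : Unw dm P u α β) : taD dm P α u = taD dm P β u :=
  purge_eq_of_unw (taD dm P) (fun α a u => P α (dm a) u) (fun _ _ _ => rfl) (fun _ _ _ => id)
    (fun a α β u _ _ hu ha => hloc (dm a) u α β ha hu) h

end Purge

theorem statement_6_general {D A : Type} (dm : A → D) (P : List A → D → D → Prop) :
    (∀ u v (α β : List A), taD dm P α u = taD dm P β u →
        taD dm P α v = taD dm P β v → (P α u v ↔ P β u v)) ↔
    (∀ u v (α β : List A), taB dm P α u = taB dm P β u →
        taB dm P α v = taB dm P β v → (P α u v ↔ P β u v)) := by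
  constructor
  · intro hloc
    exact PolicyLocal.anti P (fun u α β h => taD_eq_of_unw dm P hloc ((unw_iff_taB_eq dm P).mpr h))
      hloc
  · intro hloc
    exact PolicyLocal.anti P (fun u α β h => (unw_iff_taB_eq dm P).mp (unw_of_taD_eq dm P h)) hloc

/-- a policy is local with respect to the kernels of `ta^◇` iff it is local
with respect to the kernels of `ta^□`. -/
theorem statement_6 {D A : Type} (dm : A → D) (P : List A → D → D → Prop)
    (hrefl : ∀ α u, P α u u) :
    (∀ u v (α β : List A), taD dm P α u = taD dm P β u →
        taD dm P α v = taD dm P β v → (P α u v ↔ P β u v)) ↔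
    (∀ u v (α β : List A), taB dm P α u = taB dm P β u →
        taB dm P α v = taB dm P β v → (P α u v ↔ P β u v)) :=
  statement_6_general dm P
end

section
/- ta^□-security is monotonic with respect to policy restrictiveness: if ↣ ≤ ↣' and system M is ta^□-secure with respect to ↣, then M is ta^□-secure with respect to ↣'. -/
open Classical

theorem Unw.of_policy_le {D A : Type} {dm : A → D} {P P' : List A → D → D → Prop}
    (hle : ∀ (α : List A) u v, P α u v → P' α u v) {u : D} {α β : List A}
    (h : Unw dm P' u α β) : Unw dm P u α β := by
  induction h with
  | refl u α => exact .refl u α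
  | symm _ ih => exact ih.symm
  | trans _ _ ih₁ ih₂ => exact ih₁.trans ih₂
  | dlr u α a hP' => exact .dlr u α a (mt (hle α (dm a) u) hP')
  | wsc u a _ _ ih₁ ih₂ => exact .wsc u a ih₁ ih₂

/-- `ta^□`-security is monotonic in the restrictiveness order on policies. -/
theorem statement_13 {D A S O : Type} (dm : A → D) (P P' : List A → D → D → Prop)
    (hle : ∀ (α : List A) u v, P α u v → P' α u v)
    (step : S → A → S) (s0 : S) (obs : D → S → O)
    (hsec : ∀ u (α β : List A), Unw dm P u α β →
        obs u (runL step s0 α) = obs u (runL step s0 β)) :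
    ∀ u (α β : List A), Unw dm P' u α β →
        obs u (runL step s0 α) = obs u (runL step s0 β) :=
  fun u α β h => hsec u α β (h.of_policy_le hle)
end

section
/- Soundness of unwinding for ta^◇-security: if there exist equivalence relations {≈_u}_{u∈D} on the states of system M satisfying DLR_M, OC_M, and WSC^◇_M (if α ⊨ dom(a) ↣ u and β ⊨ dom(a) ↣ u and s0·α ≈_u s0·β and s0·α ≈_{dom(a)} s0·β, then s0·αa ≈_u s0·βa) with respect to ↣, then M is ta^◇-secure with respect to ↣. -/
open Classical

/-!
Induction on the two traces shows that `ta^◇_u(α) = ta^◇_u(β)` forces `s0·α ≈_u s0·β`.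
A newest action `a` with `α ⊭ dom(a) ↣ u` is invisible to `ta^◇_u` and, by DLR, may be
dropped from the run up to `≈_u`. Once both newest actions are visible, equal trees force
the same action `a`, equal `u`-subtrees and equal `dom(a)`-subtrees, so WSC^◇ applies to
the two induction hypotheses. OC turns `≈_u` into equality of `u`-observations.
-/

section Unwinding

variable {D A S : Type} {dm : A → D} {P : List A → D → D → Prop}

theorem taD_cons_of_pos {α : List A} {a : A} {u : D} (h : P α (dm a) u) :
    taD dm P (a :: α) u = TATree.node (taD dm P α u) (taD dm P α (dm a)) a := by
  simp only [taD, if_pos h]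

theorem taD_cons_of_not {α : List A} {a : A} {u : D} (h : ¬ P α (dm a) u) :
    taD dm P (a :: α) u = taD dm P α u := by
  simp only [taD, if_neg h]

variable {step : S → A → S} {s0 : S} {R : D → S → S → Prop}

theorem rel_runL_of_taD_eq (hequiv : ∀ u, Equivalence (R u))
    (hDLR : ∀ u (α : List A) (a : A), ¬ P α (dm a) u →
        R u (runL step s0 (a :: α)) (runL step s0 α))
    (hWSCd : ∀ u (α β : List A) (a : A), P α (dm a) u → P β (dm a) u →
        R u (runL step s0 α) (runL step s0 β) →
        R (dm a) (runL step s0 α) (runL step s0 β) →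
        R u (runL step s0 (a :: α)) (runL step s0 (a :: β)))
    (α β : List A) (u : D) (h : taD dm P α u = taD dm P β u) :
    R u (runL step s0 α) (runL step s0 β) := by
  induction α generalizing β u with
  | nil =>
    induction β with
    | nil => exact (hequiv u).refl _
    | cons b β ihβ =>
      by_cases hb : P β (dm b) u
      · rw [taD_cons_of_pos hb] at h
        cases h
      · rw [taD_cons_of_not hb] at h
        exact (hequiv u).trans (ihβ h) ((hequiv u).symm (hDLR u β b hb))
  | cons a α ihα =>
    by_cases ha : P α (dm a) u
    · induction β with
      | nil =>
        rw [taD_cons_of_pos ha] at h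
        cases h
      | cons b β ihβ =>
        by_cases hb : P β (dm b) u
        · rw [taD_cons_of_pos ha, taD_cons_of_pos hb, TATree.node.injEq] at h
          obtain ⟨hu, hdm, rfl⟩ := h
          exact hWSCd u α β a ha hb (ihα β u hu) (ihα β (dm a) hdm)
        · rw [taD_cons_of_not hb] at h
          exact (hequiv u).trans (ihβ h) ((hequiv u).symm (hDLR u β b hb))
    · rw [taD_cons_of_not ha] at h
      exact (hequiv u).trans (hDLR u α a ha) (ihα β u h)

end Unwinding

/-- soundness of the unwinding conditions DLR_M, WSC^◇_M, OC_M for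
`ta^◇`-security. -/
theorem statement_17 {D A S O : Type} (dm : A → D) (P : List A → D → D → Prop)
    (step : S → A → S) (s0 : S) (obs : D → S → O)
    (R : D → S → S → Prop)
    (hequiv : ∀ u, Equivalence (R u))
    (hDLR : ∀ u (α : List A) (a : A), ¬ P α (dm a) u →
        R u (runL step s0 (a :: α)) (runL step s0 α))
    (hWSCd : ∀ u (α β : List A) (a : A), P α (dm a) u → P β (dm a) u →
        R u (runL step s0 α) (runL step s0 β) →
        R (dm a) (runL step s0 α) (runL step s0 β) →
        R u (runL step s0 (a :: α)) (runL step s0 (a :: β)))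
    (hOC : ∀ u (s t : S), R u s t → obs u s = obs u t) :
    ∀ u (α β : List A), taD dm P α u = taD dm P β u →
        obs u (runL step s0 α) = obs u (runL step s0 β) := by
  intro u α β h
  exact hOC u _ _ (rel_runL_of_taD_eq hequiv hDLR hWSCd α β u h)
end
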